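/- Let α < 0, β < 0, γ + α > 0, β + α < 0, θ > 0, and for integers k ≥ 3 let λ*_{IM}(k) = −(β + α + (3(α+2β) + k(γ+α))/((k+3)(k−2)))θ/(γ+α). Then λ*_{IM}(4) < λ*_{IM}(3) if and only if x* < 7/6 + (4/3)(β/α); in particular, whenever x* < 7/6 + (4/3)(β/α), the minimum of λ*_{IM}(k) over integers k ≥ 3 is not attained at k = 3. -/
import Mathlib


/-- Threshold among-group selection strength for IM updating on a `k`-regular graph. -/
noncomputable def lamStarIM (α β γ θ : ℝ) (k : ℕ) : ℝ :=
  -(β + α + (3 * (α + 2 * β) + (k : ℝ) * (γ + α)) / (((k : ℝ) + 3) * ((k : ℝ) - 2)))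
    * θ / (γ + α)

/-- For PD games with `α < 0`, `β < 0`, `γ + α > 0`, `β + α < 0` and `θ > 0`,
`λ*_{IM}(4) < λ*_{IM}(3)` iff `x* = γ/(-2α) < 7/6 + (4/3)(β/α)`; in particular,
whenever `x* < 7/6 + (4/3)(β/α)`, the minimum of `λ*_{IM}(k)` over integers
`k ≥ 3` is not attained at `k = 3`. -/
theorem stmt12 (α β γ θ : ℝ) (hα : α < 0) (hβ : β < 0) (hγα : γ + α > 0)
    (hβα : β + α < 0) (hθ : 0 < θ) :
    (lamStarIM α β γ θ 4 < lamStarIM α β γ θ 3 ↔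
      γ / (-2 * α) < 7 / 6 + (4 / 3) * (β / α)) ∧
    (γ / (-2 * α) < 7 / 6 + (4 / 3) * (β / α) →
      ∃ j : ℕ, 3 ≤ j ∧ lamStarIM α β γ θ j < lamStarIM α β γ θ 3) := by
  have hα' : (0:ℝ) < -2 * α := by linarith
  have hba : β / α * α = β := div_mul_cancel₀ β (ne_of_lt hα)
  have key : lamStarIM α β γ θ 4 < lamStarIM α β γ θ 3 ↔ 3 * γ < -7 * α - 8 * β := by
    unfold lamStarIM
    push_cast
    norm_num
    rw [div_lt_div_iff₀ hγα hγα]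
    have ht : 0 < θ * (γ + α) := mul_pos hθ hγα
    constructor <;> intro h
    · nlinarith [ht]
    · nlinarith [ht]
  have key2 : γ / (-2 * α) < 7 / 6 + (4 / 3) * (β / α) ↔ 3 * γ < -7 * α - 8 * β := by
    rw [div_lt_iff₀ hα']
    constructor <;> intro h <;> nlinarith [hba]
  refine ⟨key.trans key2.symm, fun h => ⟨4, by norm_num, ?_⟩⟩
  exact key.mpr (key2.mp h)
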